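/- Let A : ℂ^{n₁×n₂} → ℂ^m satisfy (1−δ)‖Z‖_F² ≤ ‖A(Z)‖₂² ≤ (1+δ)‖Z‖_F² for all Z in a class C of matrices that contains both X − u_t v_t* and P_{R(u_t)^⊥} X, where 0 ≤ δ < 1. Suppose v_t is the least-squares solution v_t = argmin_y ‖A(X) − A(u_t y*)‖₂ (so that A(X − u_t v_t*) = A(P_{R(u_t)^⊥} X) in the noise-free case and ‖A(X − u_t v_t*)‖₂ ≤ ‖A(P_{R(u_t)^⊥} X)‖₂ in general). Then ‖X − u_t v_t*‖_F ≤ √((1+δ)/(1−δ)) · ‖X‖_F · sin θ_t, where θ_t is the angle between span(u) of the rank-one X = λuv* and span(u_t). -/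

import Mathlib

open scoped ComplexConjugate

/-- Outer product `u v*` of two complex vectors. -/
noncomputable def outerProd {n₁ n₂ : ℕ} (u : EuclideanSpace ℂ (Fin n₁))
    (v : EuclideanSpace ℂ (Fin n₂)) : Matrix (Fin n₁) (Fin n₂) ℂ :=
  fun i j => u i * conj (v j)

/-- Frobenius norm of a complex matrix. -/
noncomputable def frob {n₁ n₂ : ℕ} (M : Matrix (Fin n₁) (Fin n₂) ℂ) : ℝ :=
  Real.sqrt (∑ i, ∑ j, ‖M i j‖ ^ 2)

/-- ℓ₂ norm of a complex vector given as a plain function. -/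
noncomputable def vnorm {n : ℕ} (x : Fin n → ℂ) : ℝ :=
  Real.sqrt (∑ i, ‖x i‖ ^ 2)

/-!
The projection `(1 - u_t u_t*) X` of `X = λ u v*` is itself of the form `X - u_t ỹ*`, namely with
`ỹ = ⟪λ u, u_t⟫ v`, so least-squares optimality of `v_t` gives
`‖A (X - u_t v_t*)‖ ≤ ‖A ((1 - u_t u_t*) X)‖`. The lower RIP bound on the left and the upper one on
the right turn this into `‖X - u_t v_t*‖_F ≤ √((1+δ)/(1-δ)) ‖(1 - u_t u_t*) X‖_F`, and
`‖(1 - u_t u_t*) X‖_F = |λ| ‖(1 - u_t u_t*) u‖ ‖v‖ = ‖X‖_F ‖(1 - u_t u_t*) u‖` because `‖u‖ = 1`.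
-/

open scoped InnerProductSpace Matrix

section OuterProduct

variable {n₁ n₂ n₃ k : ℕ}

lemma smul_outerProd (z : ℂ) (a : EuclideanSpace ℂ (Fin n₁)) (b : EuclideanSpace ℂ (Fin n₂)) :
    z • outerProd a b = outerProd (z • a) b := by
  funext i j
  simp [outerProd, mul_assoc]

lemma outerProd_mul_outerProd (a : EuclideanSpace ℂ (Fin n₁)) (b c : EuclideanSpace ℂ (Fin n₂))
    (d : EuclideanSpace ℂ (Fin n₃)) :
    outerProd a b * outerProd c d = outerProd a (⟪c, b⟫_ℂ • d) := by
  funext i j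
  simp only [outerProd, Matrix.mul_apply, PiLp.inner_apply, PiLp.smul_apply, smul_eq_mul,
    map_mul, map_sum, RCLike.inner_apply, Complex.conj_conj, Finset.mul_sum, Finset.sum_mul]
  exact Finset.sum_congr rfl fun _ _ => by ring

lemma mul_outerProd (M : Matrix (Fin n₁) (Fin k) ℂ) (a : EuclideanSpace ℂ (Fin k))
    (b : EuclideanSpace ℂ (Fin n₂)) :
    M * outerProd a b = outerProd (WithLp.toLp 2 (M *ᵥ a.ofLp)) b := by
  funext i j
  simp only [outerProd, Matrix.mul_apply, Matrix.mulVec, dotProduct, Finset.sum_mul, mul_assoc]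

end OuterProduct

section Norms

variable {n n₁ n₂ : ℕ}

lemma vnorm_eq_norm_toLp (x : Fin n → ℂ) : vnorm x = ‖WithLp.toLp 2 x‖ := by
  rw [EuclideanSpace.norm_eq]
  rfl

lemma frob_nonneg (M : Matrix (Fin n₁) (Fin n₂) ℂ) : 0 ≤ frob M :=
  Real.sqrt_nonneg _

lemma frob_smul (z : ℂ) (M : Matrix (Fin n₁) (Fin n₂) ℂ) : frob (z • M) = ‖z‖ * frob M := by
  simp only [frob, Matrix.smul_apply, smul_eq_mul, norm_mul, mul_pow, ← Finset.mul_sum]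
  rw [Real.sqrt_mul (by positivity), Real.sqrt_sq (norm_nonneg z)]

lemma frob_outerProd (a : EuclideanSpace ℂ (Fin n₁)) (b : EuclideanSpace ℂ (Fin n₂)) :
    frob (outerProd a b) = ‖a‖ * ‖b‖ := by
  rw [EuclideanSpace.norm_eq, EuclideanSpace.norm_eq,
    ← Real.sqrt_mul (Finset.sum_nonneg fun _ _ => by positivity), Finset.sum_mul_sum]
  simp [frob, outerProd, mul_pow]

end Norms

lemma le_sqrt_div_mul_of_mul_sq_le {δ e p : ℝ} (hδ : δ < 1) (hp : 0 ≤ p)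
    (h : (1 - δ) * e ^ 2 ≤ (1 + δ) * p ^ 2) : e ≤ √((1 + δ) / (1 - δ)) * p := by
  rw [← Real.sqrt_sq hp, ← Real.sqrt_mul' _ (sq_nonneg p)]
  refine Real.le_sqrt_of_sq_le ?_
  rw [div_mul_eq_mul_div, le_div_iff₀ (sub_pos.2 hδ), mul_comm]
  exact h

lemma le_sqrt_div_mul_of_rip {V W : Type*} [NormedAddCommGroup W] {A : V → W} {N : V → ℝ}
    {C : Set V} {δ : ℝ} (hδ : δ < 1)
    (hrip : ∀ Z ∈ C, (1 - δ) * N Z ^ 2 ≤ ‖A Z‖ ^ 2 ∧ ‖A Z‖ ^ 2 ≤ (1 + δ) * N Z ^ 2)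
    {E P : V} (hE : E ∈ C) (hP : P ∈ C) (hNP : 0 ≤ N P) (hAEP : ‖A E‖ ≤ ‖A P‖) :
    N E ≤ √((1 + δ) / (1 - δ)) * N P := by
  refine le_sqrt_div_mul_of_mul_sq_le hδ hNP ?_
  calc (1 - δ) * N E ^ 2 ≤ ‖A E‖ ^ 2 := (hrip E hE).1
    _ ≤ ‖A P‖ ^ 2 := by gcongr
    _ ≤ (1 + δ) * N P ^ 2 := (hrip P hP).2

theorem ls_update_bound_general {n₁ n₂ m : ℕ} (δ lam : ℝ) (hδ1 : δ < 1)
    (u ut : EuclideanSpace ℂ (Fin n₁)) (v vt : EuclideanSpace ℂ (Fin n₂))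
    (hu : ‖u‖ = 1)
    (A : Matrix (Fin n₁) (Fin n₂) ℂ →ₗ[ℂ] EuclideanSpace ℂ (Fin m))
    (C : Set (Matrix (Fin n₁) (Fin n₂) ℂ))
    (hrip : ∀ Z ∈ C, (1 - δ) * frob Z ^ 2 ≤ ‖A Z‖ ^ 2 ∧ ‖A Z‖ ^ 2 ≤ (1 + δ) * frob Z ^ 2)
    (hm₁ : (lam : ℂ) • outerProd u v - outerProd ut vt ∈ C)
    (hm₂ : ((1 : Matrix (Fin n₁) (Fin n₁) ℂ) - outerProd ut ut) * ((lam : ℂ) • outerProd u v) ∈ C)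
    (hls : ∀ y : EuclideanSpace ℂ (Fin n₂),
      ‖A ((lam : ℂ) • outerProd u v - outerProd ut vt)‖
        ≤ ‖A ((lam : ℂ) • outerProd u v - outerProd ut y)‖) :
    frob ((lam : ℂ) • outerProd u v - outerProd ut vt)
      ≤ Real.sqrt ((1 + δ) / (1 - δ)) * frob ((lam : ℂ) • outerProd u v)
        * vnorm (Matrix.mulVec ((1 : Matrix (Fin n₁) (Fin n₁) ℂ) - outerProd ut ut)
            (fun i => u i)) := by
  have hQX : ((1 : Matrix (Fin n₁) (Fin n₁) ℂ) - outerProd ut ut) * ((lam : ℂ) • outerProd u v)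
      = (lam : ℂ) • outerProd u v - outerProd ut (⟪(lam : ℂ) • u, ut⟫_ℂ • v) := by
    rw [smul_outerProd, Matrix.sub_mul, Matrix.one_mul, outerProd_mul_outerProd]
  have hE := le_sqrt_div_mul_of_rip hδ1 hrip hm₁ hm₂ (frob_nonneg _) (hQX ▸ hls _)
  rw [Matrix.mul_smul, mul_outerProd, frob_smul, frob_outerProd, ← vnorm_eq_norm_toLp] at hE
  rw [frob_smul, frob_outerProd, hu]
  exact hE.trans_eq (by ring)

/-- Least-squares update bound: if `A` satisfies the two-sided RIP on a class `C`
containing `X − u_t v_t*` and `P_{R(u_t)^⊥} X`, and `v_t` is the least-squares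
solution, then `‖X − u_t v_t*‖_F ≤ √((1+δ)/(1−δ)) ‖X‖_F sin θ_t`. -/
theorem ls_update_bound {n₁ n₂ m : ℕ} (δ lam : ℝ) (hδ0 : 0 ≤ δ) (hδ1 : δ < 1)
    (hlam : 0 < lam)
    (u ut : EuclideanSpace ℂ (Fin n₁)) (v vt : EuclideanSpace ℂ (Fin n₂))
    (hu : ‖u‖ = 1) (hut : ‖ut‖ = 1) (hv : ‖v‖ = 1)
    (A : Matrix (Fin n₁) (Fin n₂) ℂ →ₗ[ℂ] EuclideanSpace ℂ (Fin m))
    (C : Set (Matrix (Fin n₁) (Fin n₂) ℂ))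
    (hrip : ∀ Z ∈ C, (1 - δ) * frob Z ^ 2 ≤ ‖A Z‖ ^ 2 ∧ ‖A Z‖ ^ 2 ≤ (1 + δ) * frob Z ^ 2)
    (hm₁ : (lam : ℂ) • outerProd u v - outerProd ut vt ∈ C)
    (hm₂ : ((1 : Matrix (Fin n₁) (Fin n₁) ℂ) - outerProd ut ut) * ((lam : ℂ) • outerProd u v) ∈ C)
    (hls : ∀ y : EuclideanSpace ℂ (Fin n₂),
      ‖A ((lam : ℂ) • outerProd u v - outerProd ut vt)‖
        ≤ ‖A ((lam : ℂ) • outerProd u v - outerProd ut y)‖) :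
    frob ((lam : ℂ) • outerProd u v - outerProd ut vt)
      ≤ Real.sqrt ((1 + δ) / (1 - δ)) * frob ((lam : ℂ) • outerProd u v)
        * vnorm (Matrix.mulVec ((1 : Matrix (Fin n₁) (Fin n₁) ℂ) - outerProd ut ut)
            (fun i => u i)) :=
  ls_update_bound_general δ lam hδ1 u ut v vt hu A C hrip hm₁ hm₂ hls
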